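/- arXiv:1808.04685 — 2 statements merged into one kernel-verified Lean document; each statement's English description precedes it below -/
import Mathlib

section
/- Telescoped norm bound along a trajectory of non-zero updates: Suppose W⁰, W¹, …, Wᵗ ∈ ℝ^{k×d} is a sequence where each Wˢ⁺¹ is obtained from Wˢ by a non-zero update of Algorithm 1 (i.e., there is a datum (x, y) with ‖x‖₂ ≤ 1 and Σ_j y v_j max(0, ⟨w_jˢ, x⟩) < 1, and noise ε obeying ε_j = 0 whenever y v_j < 0, such that w_jˢ⁺¹ = w_jˢ + η y v_j 1{⟨w_jˢ, x⟩ + ε_j ≥ 0} x for each j). Then ‖Wᵗ‖_F² ≤ ‖W⁰‖_F² + t(η²‖v‖₂² + 2η), where ‖W‖_F² = Σ_{j=1}^k ‖w_j‖₂². -/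
/-!
Expanding the square, a non-zero update changes `‖w_j‖²` by
`2 η y v_j 1{⟨w_j, x⟩ + ε_j ≥ 0} ⟨w_j, x⟩ + η² v_j² 1{…} ‖x‖²`.
The noise condition makes the first term at most `2 η y v_j max(0, ⟨w_j, x⟩)`: when `y v_j < 0`
the indicator is exactly `1{⟨w_j, x⟩ ≥ 0}`, and when `y v_j ≥ 0` it suffices that
`1{…} ⟨w_j, x⟩ ≤ max(0, ⟨w_j, x⟩)`.
Summing over `j`, the margin condition bounds the first part by `2η` and `‖x‖ ≤ 1` bounds the second
by `η² ‖v‖²`; the theorem telescopes this one-step bound.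
-/

open RealInnerProductSpace

theorem le_add_mul_of_forall_lt_le_add {f : ℕ → ℝ} {c : ℝ} {t : ℕ}
    (hf : ∀ s < t, f (s + 1) ≤ f s + c) : f t ≤ f 0 + t * c := by
  induction t with
  | zero => simp
  | succ n ih =>
    have := hf n n.lt_succ_self
    have := ih fun s hs => hf s (hs.trans n.lt_succ_self)
    push_cast
    linarith

theorem mul_ite_mul_le_mul_max (a r ε : ℝ) (hε : a < 0 → ε = 0) :
    a * (if 0 ≤ r + ε then 1 else 0) * r ≤ a * max 0 r := by
  rcases lt_or_ge a 0 with ha | ha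
  · rw [hε ha, add_zero]
    split_ifs with hr
    · rw [max_eq_right hr, mul_one]
    · rw [max_eq_left (not_le.mp hr).le]; simp
  · split_ifs
    · rw [mul_one]; exact mul_le_mul_of_nonneg_left (le_max_right 0 r) ha
    · simpa using mul_nonneg ha (le_max_left 0 r)

section

variable {E : Type*} [NormedAddCommGroup E] [InnerProductSpace ℝ E]

theorem norm_add_smul_sq_le {w x : E} (hx : ‖x‖ ≤ 1) (c : ℝ) :
    ‖w + c • x‖ ^ 2 ≤ ‖w‖ ^ 2 + 2 * (c * ⟪w, x⟫) + c ^ 2 := by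
  have hx2 : ‖x‖ ^ 2 ≤ 1 := pow_le_one₀ (norm_nonneg x) hx
  rw [norm_add_sq_real, inner_smul_right, norm_smul, mul_pow, Real.norm_eq_abs, sq_abs]
  nlinarith [sq_nonneg c]

theorem norm_sq_neuron_update_le {η a ε : ℝ} (hη : 0 ≤ η) (hε : a < 0 → ε = 0) {w x : E}
    (hx : ‖x‖ ≤ 1) :
    ‖w + (η * a * (if 0 ≤ ⟪w, x⟫ + ε then 1 else 0)) • x‖ ^ 2 ≤
      ‖w‖ ^ 2 + 2 * η * (a * max 0 ⟪w, x⟫) + η ^ 2 * a ^ 2 := by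
  set b : ℝ := if 0 ≤ ⟪w, x⟫ + ε then 1 else 0
  have hlin : η * a * b * ⟪w, x⟫ ≤ η * (a * max 0 ⟪w, x⟫) := by
    rw [mul_assoc η, mul_assoc η]
    exact mul_le_mul_of_nonneg_left (mul_ite_mul_le_mul_max a _ ε hε) hη
  have hb : b ^ 2 ≤ 1 := by simp only [b]; split_ifs <;> norm_num
  have hquad : (η * a * b) ^ 2 ≤ η ^ 2 * a ^ 2 := by
    rw [mul_pow]; nlinarith [sq_nonneg (η * a)]
  linarith [norm_add_smul_sq_le hx (η * a * b) (w := w)]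

end

def IsNonzeroUpdate {ι E : Type*} [Fintype ι] [NormedAddCommGroup E] [InnerProductSpace ℝ E]
    (η : ℝ) (v : ι → ℝ) (W W' : ι → E) : Prop :=
  ∃ (x : E) (y : ℝ) (ε : ι → ℝ),
    ‖x‖ ≤ 1 ∧ (y = 1 ∨ y = -1) ∧
    (∑ j, y * v j * max 0 ⟪W j, x⟫) < 1 ∧
    (∀ j, y * v j < 0 → ε j = 0) ∧
    (∀ j, W' j = W j + (η * y * v j * (if 0 ≤ ⟪W j, x⟫ + ε j then 1 else 0)) • x)

theorem IsNonzeroUpdate.sum_norm_sq_le {ι E : Type*} [Fintype ι] [NormedAddCommGroup E]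
    [InnerProductSpace ℝ E] {η : ℝ} (hη : 0 ≤ η) {v : ι → ℝ} {W W' : ι → E}
    (h : IsNonzeroUpdate η v W W') :
    ∑ j, ‖W' j‖ ^ 2 ≤ ∑ j, ‖W j‖ ^ 2 + (η ^ 2 * ∑ j, v j ^ 2 + 2 * η) := by
  obtain ⟨x, y, ε, hx, hy, hmargin, hε, hW'⟩ := h
  have hy2 : y ^ 2 = 1 := by rcases hy with rfl | rfl <;> norm_num
  have hj (j : ι) : ‖W' j‖ ^ 2 ≤ ‖W j‖ ^ 2 + 2 * η * (y * v j * max 0 ⟪W j, x⟫) + η ^ 2 * v j ^ 2 := by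
    have := norm_sq_neuron_update_le hη (hε j) hx (w := W j)
    rw [mul_pow y, hy2, one_mul] at this
    rwa [hW' j, mul_assoc η y]
  calc ∑ j, ‖W' j‖ ^ 2
      ≤ ∑ j, (‖W j‖ ^ 2 + 2 * η * (y * v j * max 0 ⟪W j, x⟫) + η ^ 2 * v j ^ 2) :=
        Finset.sum_le_sum fun j _ => hj j
    _ = ∑ j, ‖W j‖ ^ 2 + 2 * η * (∑ j, y * v j * max 0 ⟪W j, x⟫) + η ^ 2 * ∑ j, v j ^ 2 := by
        rw [Finset.sum_add_distrib, Finset.sum_add_distrib, Finset.mul_sum, Finset.mul_sum]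
    _ ≤ ∑ j, ‖W j‖ ^ 2 + (η ^ 2 * ∑ j, v j ^ 2 + 2 * η) := by
        nlinarith [mul_le_mul_of_nonneg_left hmargin.le (by positivity : 0 ≤ 2 * η)]

/-- Telescoped norm bound along a trajectory of non-zero updates of Algorithm 1:
after `t` non-zero updates, `‖Wᵗ‖_F² ≤ ‖W⁰‖_F² + t (η² ‖v‖₂² + 2η)`, where
`‖W‖_F² = ∑ j ‖w_j‖₂²`. -/
theorem telescoped_norm_bound
    {d k : ℕ} (η : ℝ) (hη : 0 < η) (v : Fin k → ℝ)
    (W : ℕ → Fin k → EuclideanSpace ℝ (Fin d)) (t : ℕ)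
    (hstep : ∀ s < t, ∃ (x : EuclideanSpace ℝ (Fin d)) (y : ℝ) (ε : Fin k → ℝ),
      ‖x‖ ≤ 1 ∧ (y = 1 ∨ y = -1) ∧
      (∑ j, y * v j * max 0 (inner ℝ (W s j) x : ℝ)) < 1 ∧
      (∀ j, y * v j < 0 → ε j = 0) ∧
      (∀ j, W (s + 1) j = W s j +
        (η * y * v j * (if 0 ≤ (inner ℝ (W s j) x : ℝ) + ε j then (1 : ℝ) else 0)) • x)) :
    ∑ j, ‖W t j‖ ^ 2 ≤ ∑ j, ‖W 0 j‖ ^ 2 + t * (η ^ 2 * (∑ j, (v j) ^ 2) + 2 * η) :=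
  le_add_mul_of_forall_lt_le_add (f := fun s => ∑ j, ‖W s j‖ ^ 2) fun s hs =>
    IsNonzeroUpdate.sum_norm_sq_le hη.le (hstep s hs)
end

section
/- Telescoped alignment bound along a trajectory of non-zero updates: Let v ∈ ℝ^k have all entries nonzero, v_min = min_j |v_j|, and Ω* ∈ ℝ^{k×d} have j-th row (sgn(v_j)/v_min)·ω*, where ω* satisfies y_i⟨ω*, x_i⟩ ≥ 1 for all data. Suppose W⁰, W¹, …, Wᵗ is a sequence in which each Wˢ⁺¹ is obtained from Wˢ by a non-zero update of Algorithm 1 on some datum (x_{i_s}, y_{i_s}) of the separable dataset (so y_{i_s}⟨ω*, x_{i_s}⟩ ≥ 1 and at least one perturbed ReLU indicator 1{⟨w_jˢ, x_{i_s}⟩ + ε_jˢ ≥ 0} equals 1, with w_jˢ⁺¹ = w_jˢ + η y_{i_s} v_j 1{⟨w_jˢ, x_{i_s}⟩ + ε_jˢ ≥ 0} x_{i_s}). Then ⟨Wᵗ, Ω*⟩_F ≥ ⟨W⁰, Ω*⟩_F + tη. -/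
/-!
A non-zero update moves every active neuron `j` by `η y v_j x` and leaves the others fixed.
Since `sgn(v_j) v_j = |v_j| ≥ v_min`, the move of an active neuron raises its alignment with the
`j`-th row of `Ω*` by `η (|v_j| / v_min) y ⟨ω*, x⟩ ≥ η`, the margin of `ω*` being at least `1`.
Some neuron is active, so every step raises `⟨W, Ω*⟩_F` by at least `η`, and the bound telescopes.
-/

open Finset RealInnerProductSpace

lemma mul_ite_pos_one_neg_one_eq_abs (a : ℝ) : a * (if 0 < a then 1 else -1) = |a| := by
  split_ifs with h
  · rw [abs_of_pos h, mul_one]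
  · rw [abs_of_nonpos (not_lt.mp h)]
    ring

lemma add_mul_le_of_forall_add_le {f : ℕ → ℝ} {η : ℝ} {t : ℕ}
    (h : ∀ s < t, f s + η ≤ f (s + 1)) : f 0 + t * η ≤ f t := by
  induction t with
  | zero => simp
  | succ t ih =>
    have := ih fun s hs => h s (Nat.lt_succ_of_lt hs)
    have := h t (Nat.lt_succ_self t)
    push_cast
    linarith

lemma sum_add_le_sum_of_exists {ι : Type*} [Fintype ι] {f g : ι → ℝ} {p : ι → Prop}
    [DecidablePred p] {η : ℝ} (hη : 0 ≤ η) (hp : ∃ j, p j)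
    (h : ∀ j, f j + η * (if p j then 1 else 0) ≤ g j) :
    ∑ j, f j + η ≤ ∑ j, g j := by
  obtain ⟨j₀, hj₀⟩ := hp
  have hgain : η ≤ ∑ j, η * (if p j then 1 else 0) := by
    simpa [hj₀] using
      single_le_sum (f := fun j => η * (if p j then 1 else 0)) (fun j _ => by positivity)
        (mem_univ j₀)
  have := sum_le_sum fun j (_ : j ∈ univ) => h j
  rw [sum_add_distrib] at this
  linarith

section InnerProductSpace

variable {E : Type*} [NormedAddCommGroup E] [InnerProductSpace ℝ E]

lemma le_inner_smul_smul_sign_div {η c a m : ℝ} {x ω : E} (hη : 0 ≤ η) (hm : 0 < m)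
    (hma : m ≤ |a|) (hmargin : 1 ≤ c * ⟪ω, x⟫) :
    η ≤ ⟪(η * c * a) • x, ((if 0 < a then 1 else -1) / m) • ω⟫ := by
  have hratio : 1 ≤ |a| / m := (one_le_div hm).mpr hma
  calc η = η * 1 * 1 := by ring
    _ ≤ η * (|a| / m) * (c * ⟪ω, x⟫) := by gcongr
    _ = _ := by
      rw [real_inner_smul_left, real_inner_smul_right, real_inner_comm,
        ← mul_ite_pos_one_neg_one_eq_abs]
      ring

lemma inner_add_ite_smul_ge {p : Prop} [Decidable p] {w x u : E} {b η : ℝ}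
    (h : η ≤ ⟪b • x, u⟫) :
    ⟪w, u⟫ + η * (if p then 1 else 0) ≤ ⟪w + (b * (if p then 1 else 0)) • x, u⟫ := by
  split_ifs
  · simpa [inner_add_left] using h
  · simp

end InnerProductSpace

/-- Telescoped alignment bound along a trajectory of non-zero updates of Algorithm 1 on a
linearly separable dataset: `⟨Wᵗ, Ω*⟩_F ≥ ⟨W⁰, Ω*⟩_F + t η`, where the `j`-th row of `Ω*`
is `(sgn(v_j)/v_min) ω*`. -/
theorem telescoped_alignment_bound
    {d k n : ℕ} (η : ℝ) (hη : 0 < η)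
    (v : Fin k → ℝ) (hv : ∀ j, v j ≠ 0)
    (vmin : ℝ) (hvmin : IsLeast (Set.range fun j => |v j|) vmin)
    (x : Fin n → EuclideanSpace ℝ (Fin d)) (y : Fin n → ℝ)
    (ω : EuclideanSpace ℝ (Fin d)) (hsep : ∀ i, 1 ≤ y i * (inner ℝ ω (x i) : ℝ))
    (Ω : Fin k → EuclideanSpace ℝ (Fin d))
    (hΩ : ∀ j, Ω j = (((if 0 < v j then (1 : ℝ) else -1)) / vmin) • ω)
    (W : ℕ → Fin k → EuclideanSpace ℝ (Fin d)) (t : ℕ)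
    (hstep : ∀ s < t, ∃ (i : Fin n) (ε : Fin k → ℝ),
      (∃ j, 0 ≤ (inner ℝ (W s j) (x i) : ℝ) + ε j) ∧
      (∀ j, W (s + 1) j = W s j +
        (η * y i * v j *
          (if 0 ≤ (inner ℝ (W s j) (x i) : ℝ) + ε j then (1 : ℝ) else 0)) • x i)) :
    ∑ j, (inner ℝ (W 0 j) (Ω j) : ℝ) + t * η ≤ ∑ j, (inner ℝ (W t j) (Ω j) : ℝ) := by
  obtain ⟨⟨j₀, hj₀⟩, hle⟩ := hvmin
  have hvmin_pos : 0 < vmin := hj₀ ▸ abs_pos.mpr (hv j₀)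
  refine add_mul_le_of_forall_add_le (f := fun s => ∑ j, ⟪W s j, Ω j⟫) fun s hs => ?_
  obtain ⟨i, ε, hactive, hupdate⟩ := hstep s hs
  refine sum_add_le_sum_of_exists hη.le hactive fun j => ?_
  rw [hupdate j, hΩ j]
  exact inner_add_ite_smul_ge
    (le_inner_smul_smul_sign_div hη.le hvmin_pos (hle ⟨j, rfl⟩) (hsep i))
end
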